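/- For every nonnegative integer n, the Bernoulli-Carlitz number satisfies BC_n = Σ_{j ≥ 0, r^j − 1 ≤ n} Σ_{l=0}^{r^j − 1} (−1)^j Π(r^j − 1) · S2_C(n, r^j − 1) · S2_C(r^j − 1, l) · CC_l, where S2_C denotes the Stirling-Carlitz numbers of the second kind and CC_l the Cauchy-Carlitz numbers (the outer sum is finite since S2_C(n, m) = 0 whenever n < m). -/

import Mathlib

open scoped Classical
open PowerSeries Finset

noncomputable section

variable (F : Type) [Field F] [Fintype F]

/-- The rational function field `K = 𝔽_r(T)`. -/
abbrev K : Type := RatFunc F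

/-- `r`, the cardinality of the finite field of constants. -/
def rr : ℕ := Fintype.card F

/-- The variable `T` of the rational function field. -/
def Tv : K F := RatFunc.X

/-- `[i] = T^{r^i} - T`. -/
def br (i : ℕ) : K F := Tv F ^ (rr F) ^ i - Tv F

/-- `D_0 = 1`, `D_i = [i] · D_{i-1}^r`. -/
def D : ℕ → K F
  | 0 => 1
  | i + 1 => br F (i + 1) * D i ^ rr F

/-- `L_0 = 1`, `L_i = [i] · L_{i-1}`. -/
def L : ℕ → K F
  | 0 => 1
  | i + 1 => br F (i + 1) * L i

/-- The Carlitz factorial `Π(n) = ∏_j D_j^{c_j}`, where `c_j = n / r^j % r` are the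
base-`r` digits of `n` (all digits with index `> n` vanish since `r ≥ 2`). -/
def Cf (n : ℕ) : K F := ∏ j ∈ Finset.range (n + 1), D F j ^ (n / (rr F) ^ j % rr F)

/-- The Carlitz logarithm `log_C(z) = Σ_{i ≥ 0} (-1)^i z^{r^i} / L_i`: the coefficient of
`z^m` is `(-1)^i / L_i` if `m = r^i` and `0` otherwise (note `i ≤ r^i = m` since `r ≥ 2`). -/
def logC : PowerSeries (K F) :=
  PowerSeries.mk fun m =>
    ∑ i ∈ Finset.range (m + 1), if m = (rr F) ^ i then (-1 : K F) ^ i / L F i else 0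

/-- The Carlitz exponential `e_C(z) = Σ_{i ≥ 0} z^{r^i} / D_i`. -/
def eC : PowerSeries (K F) :=
  PowerSeries.mk fun m =>
    ∑ i ∈ Finset.range (m + 1), if m = (rr F) ^ i then 1 / D F i else 0

/-- The power series `log_C(z)/z`. -/
def logCdivZ : PowerSeries (K F) :=
  PowerSeries.mk fun n => PowerSeries.coeff (R := K F) (n + 1) (logC F)

/-- The power series `e_C(z)/z`. -/
def eCdivZ : PowerSeries (K F) :=
  PowerSeries.mk fun n => PowerSeries.coeff (R := K F) (n + 1) (eC F)

/-!
Substituting `e_C` into `log_C` gives `z`. Both series are `r`-additive and `x ↦ x ^ r` is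
additive on `K`, so the coefficient of `z^{r^c}` in `log_C(e_C(z))` is
`Σ_{i ≤ c} (-1)^i / (L_i D_{c-i}^{r^i})`; multiplied by `[c] = [i] + [c-i]^{r^i}` this sum
telescopes, and it vanishes for `c > 0`.
Dividing by `z = e_C(z) · (e_C(z)/z)`, substitution of `e_C` sends `log_C(z)/z` to
`z/e_C(z)` and `z/log_C(z)` to `e_C(z)/z`. Comparing coefficients, the first gives
`BC_n = Σ_j (-1)^j Π(r^j-1) S2_C(n, r^j-1) / L_j`, and the second gives
`Σ_l S2_C(r^j-1, l) CC_l = Π(r^j-1) / D_j = 1 / L_j`, the last step because every base-`r`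
digit of `r^j - 1` is `r - 1`.
-/

namespace PowerSeries

variable {R : Type*} [CommRing R]

theorem coeff_pow_expChar_pow (p : ℕ) [ExpChar R p] (f : R⟦X⟧) (e n : ℕ) :
    coeff n (f ^ p ^ e) = if p ^ e ∣ n then coeff (n / p ^ e) f ^ p ^ e else 0 := by
  have hpe : p ^ e ≠ 0 := pow_ne_zero e (expChar_ne_zero R p)
  rw [← MvPowerSeries.map_iterateFrobenius_expand p (expChar_ne_zero R p) f e]
  change coeff n (map (iterateFrobenius R p e) (expand _ hpe f)) = _
  rw [coeff_map, coeff_expand, apply_ite (iterateFrobenius R p e), map_zero,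
    iterateFrobenius_def]

theorem coeff_pow_eq_zero_of_lt {B : R⟦X⟧} (hB : constantCoeff B = 0) {n d : ℕ} (h : n < d) :
    coeff n (B ^ d) = 0 :=
  X_pow_dvd_iff.mp (pow_dvd_pow_of_dvd (X_dvd_iff.mpr hB) d) n h

theorem coeff_subst_eq_sum {f B : R⟦X⟧} (hB : constantCoeff B = 0) {n : ℕ} (s : Finset ℕ)
    (hs : ∀ d ≤ n, coeff d f ≠ 0 → d ∈ s) :
    coeff n (f.subst B) = ∑ d ∈ s, coeff d f * coeff n (B ^ d) := by
  rw [coeff_subst' (HasSubst.of_constantCoeff_zero' hB)]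
  refine finsum_eq_sum_of_support_subset _ fun d hd => hs d ?_ (left_ne_zero_of_mul hd)
  by_contra! hnd
  exact hd (by simp only [smul_eq_mul, coeff_pow_eq_zero_of_lt hB hnd, mul_zero])

/-- `∑ i, a i • X ^ q ^ i`, with coefficients written as for `eC` and `logC`. -/
def additiveSeries (q : ℕ) (a : ℕ → R) : R⟦X⟧ :=
  mk fun m => ∑ i ∈ range (m + 1), if m = q ^ i then a i else 0

variable {q : ℕ}

theorem coeff_additiveSeries_pow (hq : 1 < q) (a : ℕ → R) (i : ℕ) :
    coeff (q ^ i) (additiveSeries q a) = a i := by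
  rw [additiveSeries, coeff_mk, sum_eq_single_of_mem i
    (mem_range.mpr (Nat.lt_succ_of_lt (Nat.lt_pow_self hq)))
    fun j _ hji => if_neg fun h => hji (Nat.pow_right_injective hq h).symm, if_pos rfl]

theorem coeff_additiveSeries_of_forall_ne (a : ℕ → R) {m : ℕ} (hm : ∀ i, m ≠ q ^ i) :
    coeff m (additiveSeries q a) = 0 := by
  simp [additiveSeries, hm]

theorem constantCoeff_additiveSeries (a : ℕ → R) : constantCoeff (additiveSeries q a) = 0 := by
  simp [additiveSeries, ← coeff_zero_eq_constantCoeff_apply]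

theorem additiveSeries_ite_zero_eq_X (hq : 1 < q) :
    additiveSeries q (fun c => if c = 0 then (1 : R) else 0) = X := by
  ext m
  by_cases hm : ∃ c, m = q ^ c
  · obtain ⟨c, rfl⟩ := hm
    simp [coeff_additiveSeries_pow hq, coeff_X, hq.ne']
  · push Not at hm
    rw [coeff_additiveSeries_of_forall_ne _ hm, coeff_X, if_neg (by simpa using hm 0)]

theorem coeff_additiveSeries_subst (hq : 1 < q) (a : ℕ → R) {B : R⟦X⟧}
    (hB : constantCoeff B = 0) (m : ℕ) :
    coeff m ((additiveSeries q a).subst B) =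
      ∑ i ∈ range (m + 1), a i * coeff m (B ^ q ^ i) := by
  rw [coeff_subst_eq_sum hB ((range (m + 1)).image (q ^ ·)),
    sum_image (Nat.pow_right_injective hq).injOn]
  · simp only [coeff_additiveSeries_pow hq]
  · intro d hd hd0
    obtain ⟨i, rfl⟩ : ∃ i, d = q ^ i := by
      by_contra! h
      exact hd0 (coeff_additiveSeries_of_forall_ne a h)
    exact mem_image_of_mem _ (mem_range.mpr (Nat.lt_succ_of_lt ((Nat.lt_pow_self hq).trans_le hd)))

section ExpChar

variable (p : ℕ) [ExpChar R p] {e : ℕ}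

theorem coeff_pow_additiveSeries_pow_pow (hq : 1 < p ^ e) (b : ℕ → R) (i k : ℕ) :
    coeff ((p ^ e) ^ k) (additiveSeries (p ^ e) b ^ (p ^ e) ^ i) =
      if i ≤ k then b (k - i) ^ (p ^ e) ^ i else 0 := by
  have h := coeff_pow_expChar_pow p (additiveSeries (p ^ e) b) (e * i) ((p ^ e) ^ k)
  rw [pow_mul] at h
  simp only [h, Nat.pow_dvd_pow_iff_le_right hq]
  split_ifs with hik
  · rw [Nat.pow_div hik (by omega), coeff_additiveSeries_pow hq]
  · rfl

theorem coeff_pow_additiveSeries_of_forall_ne (hq : 1 < p ^ e) (b : ℕ → R) (i : ℕ) {m : ℕ}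
    (hm : ∀ k, m ≠ (p ^ e) ^ k) : coeff m (additiveSeries (p ^ e) b ^ (p ^ e) ^ i) = 0 := by
  have hq0 : 0 < p ^ e := by omega
  have h := coeff_pow_expChar_pow p (additiveSeries (p ^ e) b) (e * i) m
  rw [pow_mul] at h
  rw [h, ite_eq_right_iff]
  rintro ⟨t, rfl⟩
  rw [Nat.mul_div_cancel_left t (Nat.pow_pos hq0), coeff_additiveSeries_of_forall_ne b,
    zero_pow (Nat.pow_pos hq0).ne']
  rintro j rfl
  exact hm (i + j) (pow_add _ _ _).symm

theorem additiveSeries_subst_additiveSeries (hq : 1 < p ^ e) (a b : ℕ → R) :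
    (additiveSeries (p ^ e) a).subst (additiveSeries (p ^ e) b) =
      additiveSeries (p ^ e) fun c => ∑ i ∈ range (c + 1), a i * b (c - i) ^ (p ^ e) ^ i := by
  ext m
  rw [coeff_additiveSeries_subst hq a (constantCoeff_additiveSeries b)]
  by_cases hm : ∃ c, m = (p ^ e) ^ c
  · obtain ⟨c, rfl⟩ := hm
    have hc : c + 1 ≤ (p ^ e) ^ c + 1 := Nat.succ_le_succ (Nat.lt_pow_self hq).le
    rw [coeff_additiveSeries_pow hq, ← sum_subset (range_subset_range.mpr hc)]
    · refine sum_congr rfl fun i hi => ?_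
      rw [coeff_pow_additiveSeries_pow_pow p hq, if_pos (Nat.lt_succ_iff.mp (mem_range.mp hi))]
    · intro i _ hi
      rw [coeff_pow_additiveSeries_pow_pow p hq, if_neg (by simpa using hi), mul_zero]
  · push Not at hm
    rw [coeff_additiveSeries_of_forall_ne _ hm]
    exact sum_eq_zero fun i _ => by rw [coeff_pow_additiveSeries_of_forall_ne p hq b i hm, mul_zero]

end ExpChar

end PowerSeries

theorem Nat.pow_sub_one_div_pow {r i j : ℕ} (hr : 0 < r) (hij : i ≤ j) :
    (r ^ j - 1) / r ^ i = r ^ (j - i) - 1 := by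
  obtain ⟨k, rfl⟩ := Nat.exists_eq_add_of_le hij
  have hA : 0 < r ^ k := Nat.pow_pos hr
  have hB : 0 < r ^ i := Nat.pow_pos hr
  rw [Nat.add_sub_cancel_left, pow_add]
  refine Nat.div_eq_of_lt_le ?_ ?_
  · rw [Nat.sub_one_mul, mul_comm]
    exact Nat.sub_le_sub_left hB _
  · rw [Nat.sub_add_cancel hA, mul_comm]
    exact Nat.sub_lt (by positivity) one_pos

theorem Nat.pow_sub_one_mod_self {r t : ℕ} (hr : 0 < r) (ht : t ≠ 0) :
    (r ^ t - 1) % r = r - 1 := by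
  obtain ⟨t, rfl⟩ := Nat.exists_eq_succ_of_ne_zero ht
  have h : r ^ (t + 1) - 1 = r - 1 + r * (r ^ t - 1) := by
    rw [pow_succ', Nat.mul_sub_one, ← Nat.sub_add_comm hr,
      Nat.add_sub_cancel' (Nat.le_mul_of_pos_right r (Nat.pow_pos hr))]
  rw [h, Nat.add_mul_mod_self_left, Nat.mod_eq_of_lt (Nat.sub_lt hr one_pos)]

theorem one_lt_rr : 1 < rr F := Fintype.one_lt_card

theorem exists_expChar_rr : ∃ p e : ℕ, ExpChar (K F) p ∧ rr F = p ^ e := by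
  obtain ⟨p, _, n, hp, hcard⟩ := FiniteField.card' F
  have : ExpChar F p := .prime hp
  exact ⟨p, n, expChar_of_injective_algebraMap (algebraMap F (K F)).injective p, hcard⟩

theorem br_zero : br F 0 = 0 := by simp [br]

theorem br_ne_zero {i : ℕ} (hi : i ≠ 0) : br F i ≠ 0 := by
  have h : br F i = algebraMap (Polynomial F) (K F) (Polynomial.X ^ rr F ^ i - Polynomial.X) := by
    simp [br, Tv]
  rw [h, map_ne_zero_iff _ (RatFunc.algebraMap_injective F)]
  exact FiniteField.X_pow_card_pow_sub_X_ne_zero F hi (one_lt_rr F)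

theorem br_add (i k : ℕ) : br F (i + k) = br F i + br F k ^ rr F ^ i := by
  obtain ⟨p, e, _, hr⟩ := exists_expChar_rr F
  simp only [br, hr, ← pow_mul, sub_pow_expChar_pow]
  ring

theorem D_ne_zero (i : ℕ) : D F i ≠ 0 := by
  induction i with
  | zero => exact one_ne_zero
  | succ i ih => exact mul_ne_zero (br_ne_zero F i.succ_ne_zero) (pow_ne_zero _ ih)

theorem L_ne_zero (i : ℕ) : L F i ≠ 0 := by
  induction i with
  | zero => exact one_ne_zero
  | succ i ih => exact mul_ne_zero (br_ne_zero F i.succ_ne_zero) ih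

theorem Cf_ne_zero (n : ℕ) : Cf F n ≠ 0 :=
  prod_ne_zero_iff.mpr fun i _ => pow_ne_zero _ (D_ne_zero F i)

theorem Cf_rr_pow_sub_one (j : ℕ) :
    Cf F (rr F ^ j - 1) = ∏ i ∈ range j, D F i ^ (rr F - 1) := by
  have hr : 0 < rr F := Nat.zero_lt_of_lt (one_lt_rr F)
  have hj : j ≤ rr F ^ j - 1 + 1 := by
    have := Nat.lt_pow_self (one_lt_rr F) (n := j)
    omega
  rw [Cf, ← prod_subset (range_subset_range.mpr hj)]
  · refine prod_congr rfl fun i hi => ?_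
    have hij := mem_range.mp hi
    rw [Nat.pow_sub_one_div_pow hr hij.le, Nat.pow_sub_one_mod_self hr (Nat.sub_ne_zero_of_lt hij)]
  · intro i _ hi
    rw [Nat.div_eq_of_lt, Nat.zero_mod, pow_zero]
    exact (Nat.sub_lt (Nat.pow_pos hr) one_pos).trans_le
      (Nat.pow_le_pow_right hr (not_lt.mp (mem_range.not.mp hi)))

theorem D_eq_L_mul_Cf (j : ℕ) : D F j = L F j * Cf F (rr F ^ j - 1) := by
  induction j with
  | zero => simp [D, L, Cf]
  | succ j ih =>
    rw [Cf_rr_pow_sub_one] at ih ⊢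
    rw [D, L, prod_range_succ, ih]
    nth_rw 2 [← Nat.sub_add_cancel (one_lt_rr F).le]
    rw [pow_succ]
    ring

theorem sum_neg_one_pow_div_L_mul_D_pow (c : ℕ) :
    ∑ i ∈ range (c + 1), (-1) ^ i / L F i * (1 / D F (c - i)) ^ rr F ^ i =
      if c = 0 then 1 else 0 := by
  split_ifs with hc
  · simp [hc, L, D]
  -- after multiplying by `[c] = [i] + [c-i]^{r^i}`, the `i`-th term is `g i - g (i + 1)`
  set g : ℕ → K F := fun i => (-1) ^ i * br F i / (L F i * D F (c - i) ^ rr F ^ i) with hg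
  have step : ∀ i ∈ range c,
      br F c * ((-1) ^ i / L F i * (1 / D F (c - i)) ^ rr F ^ i) = g i - g (i + 1) := by
    intro i hi
    obtain ⟨k, rfl⟩ := Nat.exists_eq_add_of_lt (mem_range.mp hi)
    have hk : i + k + 1 - i = k + 1 := by omega
    have hk' : i + k + 1 - (i + 1) = k := by omega
    simp only [hg]
    rw [hk, hk', add_assoc i k 1, br_add F i (k + 1),
      show D F (k + 1) = br F (k + 1) * D F k ^ rr F from rfl,
      show L F (i + 1) = br F (i + 1) * L F i from rfl, pow_succ' (rr F) i, pow_mul]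
    simp only [one_div, inv_pow, mul_pow]
    have := pow_ne_zero (rr F ^ i) (br_ne_zero F (Nat.succ_ne_zero k))
    have := pow_ne_zero (rr F ^ i) (pow_ne_zero (rr F) (D_ne_zero F k))
    have := br_ne_zero F (Nat.succ_ne_zero i)
    have := L_ne_zero F i
    field_simp
    ring
  have last : br F c * ((-1) ^ c / L F c * (1 / D F (c - c)) ^ rr F ^ c) = g c := by
    simp only [hg, Nat.sub_self, D, div_one, one_pow, mul_one]
    ring
  apply mul_left_cancel₀ (br_ne_zero F hc)
  rw [mul_zero, mul_sum, sum_range_succ, sum_congr rfl step, sum_range_sub', last]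
  simp [hg, br_zero]

theorem eC_eq_additiveSeries : eC F = additiveSeries (rr F) fun i => 1 / D F i := rfl

theorem logC_eq_additiveSeries : logC F = additiveSeries (rr F) fun i => (-1) ^ i / L F i := rfl

theorem logC_subst_eC : (logC F).subst (eC F) = X := by
  obtain ⟨p, e, _, hr⟩ := exists_expChar_rr F
  have h := additiveSeries_subst_additiveSeries p (hr ▸ one_lt_rr F)
    (fun i => (-1) ^ i / L F i) (fun i => 1 / D F i)
  rw [← hr] at h
  rw [logC_eq_additiveSeries, eC_eq_additiveSeries, h]
  simp only [sum_neg_one_pow_div_L_mul_D_pow]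
  exact additiveSeries_ite_zero_eq_X (one_lt_rr F)

theorem constantCoeff_eC : constantCoeff (eC F) = 0 := constantCoeff_additiveSeries _

theorem logC_eq_X_mul : logC F = X * logCdivZ F := by
  rw [logCdivZ, ← sub_const_eq_X_mul_shift, logC_eq_additiveSeries, constantCoeff_additiveSeries,
    map_zero, sub_zero]

theorem eC_eq_X_mul : eC F = X * eCdivZ F := by
  rw [eCdivZ, ← sub_const_eq_X_mul_shift, constantCoeff_eC, map_zero, sub_zero]

theorem eC_mul_logCdivZ_subst_eC : eC F * (logCdivZ F).subst (eC F) = X := by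
  have hE := HasSubst.of_constantCoeff_zero' (constantCoeff_eC F)
  rw [← logC_subst_eC F, logC_eq_X_mul, subst_mul hE, subst_X hE]

theorem eCdivZ_mul_logCdivZ_subst_eC : eCdivZ F * (logCdivZ F).subst (eC F) = 1 := by
  apply mul_left_cancel₀ (X_ne_zero (R := K F))
  rw [mul_one, ← mul_assoc, ← eC_eq_X_mul, eC_mul_logCdivZ_subst_eC]

theorem coeff_logCdivZ_subst_eC (n : ℕ) :
    coeff n ((logCdivZ F).subst (eC F)) =
      ∑ j ∈ (range (n + 1)).filter (fun j => rr F ^ j - 1 ≤ n),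
        (-1) ^ j / L F j * coeff n (eC F ^ (rr F ^ j - 1)) := by
  have hr := one_lt_rr F
  have hpos (j : ℕ) : 0 < rr F ^ j := Nat.pow_pos (Nat.zero_lt_of_lt hr)
  rw [coeff_subst_eq_sum (constantCoeff_eC F)
      (((range (n + 1)).filter (fun j => rr F ^ j - 1 ≤ n)).image (rr F ^ · - 1)),
    sum_image fun i _ j _ h => Nat.pow_right_injective hr (Nat.sub_one_cancel (hpos i) (hpos j) h)]
  · refine sum_congr rfl fun j _ => ?_
    rw [logCdivZ, coeff_mk, Nat.sub_add_cancel (hpos j), logC_eq_additiveSeries,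
      coeff_additiveSeries_pow hr]
  · intro d hd hd0
    rw [logCdivZ, coeff_mk] at hd0
    obtain ⟨j, hj⟩ : ∃ j, d + 1 = rr F ^ j := by
      by_contra! h
      exact hd0 (coeff_additiveSeries_of_forall_ne _ h)
    refine mem_image.mpr ⟨j, mem_filter.mpr ⟨mem_range.mpr ?_, by omega⟩, by omega⟩
    have := Nat.lt_pow_self hr (n := j)
    omega

theorem coeff_eCdivZ_rr_pow_sub_one (j : ℕ) : coeff (rr F ^ j - 1) (eCdivZ F) = (D F j)⁻¹ := by
  rw [eCdivZ, coeff_mk, Nat.sub_add_cancel (Nat.one_le_pow _ _ (Nat.zero_lt_of_lt (one_lt_rr F))),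
    eC_eq_additiveSeries, coeff_additiveSeries_pow (one_lt_rr F), one_div]

theorem eq_Cf_mul_coeff_eC_pow_div {S2C : ℕ → ℕ → K F}
    (hS2C : ∀ n k : ℕ,
      PowerSeries.coeff (R := K F) n (eC F ^ k) / Cf F k = S2C n k / Cf F n) (n k : ℕ) :
    S2C n k = Cf F n * coeff n (eC F ^ k) / Cf F k := by
  rw [mul_div_assoc, hS2C, mul_div_cancel₀ _ (Cf_ne_zero F n)]

theorem bernoulliCarlitz_eq_sum_stirlingCarlitz (BC : ℕ → K F) (S2C : ℕ → ℕ → K F)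
    (hBC : (PowerSeries.mk fun n => BC n / Cf F n) * eCdivZ F = 1)
    (hS2C : ∀ n k : ℕ,
      PowerSeries.coeff (R := K F) n (eC F ^ k) / Cf F k = S2C n k / Cf F n) (n : ℕ) :
    BC n = ∑ j ∈ (range (n + 1)).filter (fun j => rr F ^ j - 1 ≤ n),
      (-1) ^ j * Cf F (rr F ^ j - 1) * S2C n (rr F ^ j - 1) / L F j := by
  have hB : (mk fun n => BC n / Cf F n) = (logCdivZ F).subst (eC F) :=
    left_inv_eq_right_inv hBC (eCdivZ_mul_logCdivZ_subst_eC F)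
  have hn := congrArg (coeff n) hB
  rw [coeff_mk, coeff_logCdivZ_subst_eC, div_eq_iff (Cf_ne_zero F n), sum_mul] at hn
  rw [hn]
  refine sum_congr rfl fun j _ => ?_
  rw [eq_Cf_mul_coeff_eC_pow_div F hS2C]
  field_simp [Cf_ne_zero, L_ne_zero]

theorem sum_stirlingCarlitz_mul_cauchyCarlitz (CC : ℕ → K F) (S2C : ℕ → ℕ → K F)
    (hCC : (PowerSeries.mk fun n => CC n / Cf F n) * logCdivZ F = 1)
    (hS2C : ∀ n k : ℕ,
      PowerSeries.coeff (R := K F) n (eC F ^ k) / Cf F k = S2C n k / Cf F n) (j : ℕ) :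
    ∑ l ∈ range (rr F ^ j - 1 + 1), S2C (rr F ^ j - 1) l * CC l = (L F j)⁻¹ := by
  have hE := HasSubst.of_constantCoeff_zero' (constantCoeff_eC F)
  have hC : (mk fun n => CC n / Cf F n).subst (eC F) = eCdivZ F := by
    refine left_inv_eq_right_inv ?_ (mul_comm (eCdivZ F) _ ▸ eCdivZ_mul_logCdivZ_subst_eC F)
    rw [← subst_mul hE, hCC, ← coe_substAlgHom hE, map_one]
  have hm := congrArg (coeff (rr F ^ j - 1)) hC
  rw [coeff_eCdivZ_rr_pow_sub_one, coeff_subst_eq_sum (constantCoeff_eC F)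
    (range (rr F ^ j - 1 + 1)) fun d hd _ => mem_range.mpr (Nat.lt_succ_of_le hd)] at hm
  have hL : (L F j)⁻¹ = Cf F (rr F ^ j - 1) * (D F j)⁻¹ := by
    rw [D_eq_L_mul_Cf]
    field_simp [Cf_ne_zero, L_ne_zero]
  rw [hL, ← hm, mul_sum]
  refine sum_congr rfl fun l _ => ?_
  rw [eq_Cf_mul_coeff_eC_pow_div F hS2C, coeff_mk]
  field_simp [Cf_ne_zero]

/-- Theorem: `BC_n = Σ_{j ≥ 0, r^j - 1 ≤ n} Σ_{l=0}^{r^j - 1}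
(-1)^j Π(r^j - 1) · S2_C(n, r^j - 1) · S2_C(r^j - 1, l) · CC_l`.
(Any `j` with `r^j - 1 ≤ n` satisfies `j ≤ n` since `r ≥ 2`.) -/
theorem bernoulliCarlitz_eq_double_sum
    (BC CC : ℕ → K F) (S2C : ℕ → ℕ → K F)
    (hBC : (PowerSeries.mk fun n => BC n / Cf F n) * eCdivZ F = 1)
    (hCC : (PowerSeries.mk fun n => CC n / Cf F n) * logCdivZ F = 1)
    (hS2C : ∀ n k : ℕ,
      PowerSeries.coeff (R := K F) n (eC F ^ k) / Cf F k = S2C n k / Cf F n)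
    (n : ℕ) :
    BC n = ∑ j ∈ (Finset.range (n + 1)).filter (fun j => (rr F) ^ j - 1 ≤ n),
      ∑ l ∈ Finset.range ((rr F) ^ j - 1 + 1),
        (-1 : K F) ^ j * Cf F ((rr F) ^ j - 1) *
          S2C n ((rr F) ^ j - 1) * S2C ((rr F) ^ j - 1) l * CC l := by
  rw [bernoulliCarlitz_eq_sum_stirlingCarlitz F BC S2C hBC hS2C]
  refine sum_congr rfl fun j _ => ?_
  rw [div_eq_mul_inv, ← sum_stirlingCarlitz_mul_cauchyCarlitz F CC S2C hCC hS2C, mul_sum]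
  exact sum_congr rfl fun l _ => by ring
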